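/- Let f be the Collatz map, N1 = {n ∈ ℕ≥1 : n ≡ 1 or 5 (mod 6)}, N2 = {n ∈ ℕ≥1 : n ≡ 4 or 16 (mod 18)}, and P the first-return map of f on N1 ∪ N2. Then the Collatz conjecture holds if and only if 1 ∈ orb(n;P) for every n ∈ N1 ∪ N2. -/

import Mathlib

/-- The Collatz map on positive integers: `3n+1` for odd `n`, `n/2` for even `n`. -/
def collatz (n : ℕ+) : ℕ+ :=
  if h : (n : ℕ) % 2 = 1 then 3 * n + 1
  else ⟨(n : ℕ) / 2, by
    have h2 : 0 < n.1 := n.2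
    have h3 : ¬ n.1 % 2 = 1 := h
    show 0 < n.1 / 2
    omega⟩

/-- The forward orbit of `x` under `f`. -/
def orbit {X : Type*} (f : X → X) (x : X) : Set X := Set.range fun k => f^[k] x

/-- The orbit equivalence relation induced by `f`: `x ~ y` iff the orbits meet. -/
def orbEquiv {X : Type*} (f : X → X) (x y : X) : Prop :=
  (orbit f x ∩ orbit f y).Nonempty

/-- `N₁ = {n : n ≡ 1, 5 (mod 6)}`. -/
def N1 : Set ℕ+ := {n : ℕ+ | (n : ℕ) % 6 = 1 ∨ (n : ℕ) % 6 = 5}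

/-- `N₂ = {n : n ≡ 4, 16 (mod 18)}`. -/
def N2 : Set ℕ+ := {n : ℕ+ | (n : ℕ) % 18 = 4 ∨ (n : ℕ) % 18 = 16}

/-- `y` is the first return of `x` to `S` under iteration of `f`: for some `k ≥ 1`,
`y = f^[k] x ∈ S` and no earlier positive iterate of `x` lies in `S`. -/
def IsFirstReturn {X : Type*} (f : X → X) (S : Set X) (x y : X) : Prop :=
  ∃ k : ℕ, 0 < k ∧ f^[k] x ∈ S ∧ y = f^[k] x ∧ ∀ j : ℕ, 0 < j → j < k → f^[j] x ∉ S

/-!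
If `P` is the first-return map of `f` to `S`, then for `x ∈ S` the `P`-orbit of `x` is exactly
the part of its `f`-orbit lying in `S`. Every Collatz orbit enters `N₁ ∪ N₂`, and `1 ∈ N₁`, so
reaching `1` under `f` from any start is the same as reaching `1` under `P` from any point of
`N₁ ∪ N₂`.
-/

section FirstReturn

variable {X : Type*} {f P : X → X} {S : Set X}

theorem orbit_subset_of_mem {x y : X} (hy : y ∈ orbit f x) : orbit f y ⊆ orbit f x := by
  obtain ⟨m, rfl⟩ := hy
  rintro _ ⟨k, rfl⟩
  exact ⟨k + m, Function.iterate_add_apply f k m x⟩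

theorem iterate_firstReturn_mem_inter_orbit (hP : ∀ x ∈ S, IsFirstReturn f S x (P x))
    {x : X} (hx : x ∈ S) (j : ℕ) : P^[j] x ∈ S ∩ orbit f x := by
  induction j with
  | zero => exact ⟨hx, 0, rfl⟩
  | succ j ih =>
    obtain ⟨hjS, m, hm⟩ := ih
    obtain ⟨k, -, hkS, hPk, -⟩ := hP _ hjS
    rw [Function.iterate_succ_apply', hPk]
    refine ⟨hkS, k + m, ?_⟩
    simp only [Function.iterate_add_apply, hm]

theorem iterate_mem_orbit_firstReturn (hP : ∀ x ∈ S, IsFirstReturn f S x (P x))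
    (m : ℕ) : ∀ x ∈ S, f^[m] x ∈ S → f^[m] x ∈ orbit P x := by
  induction m using Nat.strong_induction_on with
  | _ m ih =>
    intro x hx hmS
    obtain rfl | hm := Nat.eq_zero_or_pos m
    · exact ⟨0, rfl⟩
    obtain ⟨k, hk, hkS, hPk, hfirst⟩ := hP x hx
    have hkm : k ≤ m := by
      by_contra! hmk
      exact hfirst m hm hmk hmS
    have hsplit : f^[m - k] (P x) = f^[m] x := by
      rw [hPk, ← Function.iterate_add_apply, Nat.sub_add_cancel hkm]
    obtain ⟨j, hj⟩ := ih (m - k) (by omega) (P x) (hPk ▸ hkS) (hsplit ▸ hmS)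
    exact ⟨j + 1, by simpa only [Function.iterate_succ_apply, hsplit] using hj⟩

theorem orbit_firstReturn_eq (hP : ∀ x ∈ S, IsFirstReturn f S x (P x)) {x : X}
    (hx : x ∈ S) : orbit P x = S ∩ orbit f x := by
  apply Set.Subset.antisymm
  · rintro _ ⟨j, rfl⟩
    exact iterate_firstReturn_mem_inter_orbit hP hx j
  · rintro _ ⟨hyS, m, rfl⟩
    exact iterate_mem_orbit_firstReturn hP m x hx hyS

end FirstReturn

section Collatz

theorem coe_collatz_of_odd {n : ℕ+} (h : (n : ℕ) % 2 = 1) :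
    (collatz n : ℕ) = 3 * n + 1 := by
  rw [show collatz n = 3 * n + 1 from dif_pos h, PNat.add_coe, PNat.mul_coe]
  rfl

theorem coe_collatz_of_even {n : ℕ+} (h : (n : ℕ) % 2 = 0) :
    (collatz n : ℕ) = n / 2 := by
  have hpos : 0 < (n : ℕ) / 2 := Nat.div_pos (by have := n.pos; omega) two_pos
  rw [show collatz n = ⟨(n : ℕ) / 2, hpos⟩ from dif_neg (by omega), PNat.mk_coe]

theorem one_mem_N1_union_N2 : (1 : ℕ+) ∈ N1 ∪ N2 :=
  Or.inl (Or.inl rfl)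

theorem iterate_collatz_mem_of_mod_six_eq_three {n : ℕ+} (h : (n : ℕ) % 6 = 3) :
    collatz^[2] n ∈ N1 ∪ N2 ∨ collatz^[3] n ∈ N1 ∪ N2 := by
  set a := collatz n
  set b := collatz a
  have ha : (a : ℕ) = 3 * n + 1 := coe_collatz_of_odd (by omega)
  -- `a ≡ 10 (mod 18)`, so `b = a / 2 ≡ 5 (mod 9)`.
  have hb : (b : ℕ) = a / 2 := coe_collatz_of_even (by omega)
  by_cases hb5 : (b : ℕ) % 18 = 5
  · left
    change b ∈ N1 ∪ N2
    exact Or.inl (Or.inr (by omega))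
  · have hc : (collatz b : ℕ) = b / 2 := coe_collatz_of_even (by omega)
    right
    change collatz b ∈ N1 ∪ N2
    simp only [Set.mem_union, N1, N2, Set.mem_ofPred_eq]
    omega

theorem exists_iterate_collatz_mem (n : ℕ+) : ∃ m, collatz^[m] n ∈ N1 ∪ N2 := by
  induction hn : (n : ℕ) using Nat.strong_induction_on generalizing n with
  | _ v ih =>
    subst hn
    by_cases heven : (n : ℕ) % 2 = 0
    · have hlt : (collatz n : ℕ) < n := by
        rw [coe_collatz_of_even heven]
        exact Nat.div_lt_self n.pos one_lt_two
      obtain ⟨m, hm⟩ := ih _ hlt (collatz n) rfl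
      exact ⟨m + 1, hm⟩
    by_cases h3 : (n : ℕ) % 6 = 3
    · rcases iterate_collatz_mem_of_mod_six_eq_three h3 with h | h
      exacts [⟨2, h⟩, ⟨3, h⟩]
    · exact ⟨0, Or.inl (show (n : ℕ) % 6 = 1 ∨ (n : ℕ) % 6 = 5 by omega)⟩

end Collatz

/-- The Collatz conjecture holds iff `1 ∈ orb(n;P)` for every `n ∈ N₁ ∪ N₂`, where `P` is
the first-return map of the Collatz map on `N₁ ∪ N₂`. -/
theorem collatz_iff_firstReturn_orbit (P : ℕ+ → ℕ+)
    (hP : ∀ x ∈ N1 ∪ N2, IsFirstReturn collatz (N1 ∪ N2) x (P x)) :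
    (∀ n : ℕ+, (1 : ℕ+) ∈ orbit collatz n) ↔ ∀ n ∈ N1 ∪ N2, (1 : ℕ+) ∈ orbit P n := by
  constructor
  · intro h n hn
    rw [orbit_firstReturn_eq hP hn]
    exact ⟨one_mem_N1_union_N2, h n⟩
  · intro h n
    obtain ⟨m, hm⟩ := exists_iterate_collatz_mem n
    have h1 := h _ hm
    rw [orbit_firstReturn_eq hP hm] at h1
    exact orbit_subset_of_mem ⟨m, rfl⟩ h1.2
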